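/- Let p be a prime. For every k with 1 ≤ k ≤ p-1, the Gaussian q-binomial coefficients satisfy binom_q(p−1+k, k) · binom_q(p−1, k)^{−1} ≡ ((-1)^k · q^{C(k+1,2)} · [p]_q / [k]_q) · (1 + [p]_q/[k]_q + [p]_q · ∑_{j=1}^{k-1} (1+q^j)/[j]_q) (mod [p]_q^3). -/

import Mathlib

open Polynomial Finset

noncomputable section

/-- The `q`-integer `[n]_q = 1 + q + ⋯ + q^(n-1)`, as a polynomial in `ℚ[q]`. -/
def qIntP (n : ℕ) : Polynomial ℚ := ∑ i ∈ Finset.range n, X ^ i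

/-- The `q`-integer `[n]_q` viewed in the field of rational functions `ℚ(q)`. -/
def qN (n : ℕ) : RatFunc ℚ := algebraMap (Polynomial ℚ) (RatFunc ℚ) (qIntP n)

/-- The `q`-Pochhammer symbol `(q; q)_n = ∏_{j=1}^{n} (1 - q^j)` in `ℚ(q)`. -/
def qqPoch (n : ℕ) : RatFunc ℚ :=
  algebraMap (Polynomial ℚ) (RatFunc ℚ) (∏ j ∈ Finset.range n, (1 - X ^ (j + 1)))

/-- The `q`-Pochhammer symbol `(-q; q)_n = ∏_{j=1}^{n} (1 + q^j)` in `ℚ(q)`. -/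
def nqPoch (n : ℕ) : RatFunc ℚ :=
  algebraMap (Polynomial ℚ) (RatFunc ℚ) (∏ j ∈ Finset.range n, (1 + X ^ (j + 1)))

/-- The Gaussian `q`-binomial coefficient, as a rational function. -/
def qbin (n k : ℕ) : RatFunc ℚ :=
  if k ≤ n then qqPoch n / (qqPoch k * qqPoch (n - k)) else 0

/-- `qCong p r x y` means `x ≡ y (mod [p]_q^r)`: the difference `x - y` can be
written as a fraction whose numerator (a polynomial) is divisible by `[p]_q^r`
and whose denominator is relatively prime to `[p]_q`. -/
def qCong (p r : ℕ) (x y : RatFunc ℚ) : Prop :=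
  ∃ a b : Polynomial ℚ, IsCoprime b (qIntP p) ∧
    (x - y) * algebraMap (Polynomial ℚ) (RatFunc ℚ) b =
      algebraMap (Polynomial ℚ) (RatFunc ℚ) (qIntP p ^ r * a)

/-!
Write `P = [p]_q`. The ratio of `q`-binomials is `∏_{i<k} [p+i] / ∏_{i<k} [p-1-i]`. Since
`[p+i] = [i] + q^i P` and `q^(i+1) [p-1-i] = P - [i+1]`, the numerator is
`P ∏_{i=1}^{k-1} ([i] + q^i P)` and the `i`-th denominator factor is
`-q^(-(i+1)) [i+1] (1 - P/[i+1])`.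
For `1 ≤ j ≤ p-1` the polynomial `[j]` is prime to `P = Φ_p`, so it is a unit in the local ring
at `P`; expanding both products to first order in `P`, i.e. modulo `P²`, and multiplying by the
prefactor `P` gives the congruence modulo `P³`.
-/

section PowDvd

variable {R K : Type*} [CommRing R] [Field K] [Algebra R K]

/-- `P ^ r` divides `x` in the ring of fractions of `R` whose denominators are coprime to `P`;
thus `qCong p r x y` is `PowDvd (qIntP p) r (x - y)`. -/
def PowDvd (P : R) (r : ℕ) (x : K) : Prop :=
  ∃ a b : R, IsCoprime b P ∧ x * algebraMap R K b = algebraMap R K (P ^ r * a)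

namespace PowDvd

variable {P : R} {r s : ℕ} {x y : K}

theorem zero : PowDvd P r (0 : K) := ⟨0, 1, isCoprime_one_left, by simp⟩

theorem algebraMap_mem (a : R) : PowDvd P 0 (algebraMap R K a) :=
  ⟨a, 1, isCoprime_one_left, by simp⟩

theorem one : PowDvd P 0 (1 : K) := by
  simpa using algebraMap_mem (K := K) (P := P) 1

theorem algebraMap_self : PowDvd P 1 (algebraMap R K P) :=
  ⟨1, 1, isCoprime_one_left, by simp⟩

theorem inv_algebraMap {b : R} (hb : IsCoprime b P) : PowDvd P 0 (algebraMap R K b)⁻¹ := by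
  rcases eq_or_ne (algebraMap R K b) 0 with h | h
  · simpa [h] using zero
  · exact ⟨1, b, hb, by simp [h]⟩

theorem add (hx : PowDvd P r x) (hy : PowDvd P r y) : PowDvd P r (x + y) := by
  obtain ⟨a, b, hb, hab⟩ := hx
  obtain ⟨c, d, hd, hcd⟩ := hy
  refine ⟨a * d + c * b, b * d, hb.mul_left hd, ?_⟩
  calc (x + y) * algebraMap R K (b * d)
      = x * algebraMap R K b * algebraMap R K d + y * algebraMap R K d * algebraMap R K b := by
        rw [map_mul]; ring
    _ = _ := by rw [hab, hcd]; simp only [map_mul, map_add]; ring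

theorem neg (hx : PowDvd P r x) : PowDvd P r (-x) := by
  obtain ⟨a, b, hb, hab⟩ := hx
  exact ⟨-a, b, hb, by simp only [neg_mul, hab, mul_neg, map_neg]⟩

theorem mul (hx : PowDvd P r x) (hy : PowDvd P s y) : PowDvd P (r + s) (x * y) := by
  obtain ⟨a, b, hb, hab⟩ := hx
  obtain ⟨c, d, hd, hcd⟩ := hy
  refine ⟨a * c, b * d, hb.mul_left hd, ?_⟩
  calc x * y * algebraMap R K (b * d) = x * algebraMap R K b * (y * algebraMap R K d) := by
        rw [map_mul]; ring
    _ = _ := by rw [hab, hcd, ← map_mul, pow_add]; ring_nf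

theorem mono (hx : PowDvd P r x) (hsr : s ≤ r) : PowDvd P s x := by
  obtain ⟨a, b, hb, hab⟩ := hx
  refine ⟨P ^ (r - s) * a, b, hb, ?_⟩
  rw [hab, ← mul_assoc, ← pow_add, Nat.add_sub_cancel' hsr]

theorem mul_left (hx : PowDvd P 0 x) (hy : PowDvd P r y) : PowDvd P r (x * y) := by
  simpa using hx.mul hy

theorem mul_right (hx : PowDvd P r x) (hy : PowDvd P 0 y) : PowDvd P r (x * y) :=
  hx.mul hy

theorem pow (hx : PowDvd P r x) (n : ℕ) : PowDvd P (n * r) (x ^ n) := by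
  induction n with
  | zero => simpa using one
  | succ n ih => simpa [pow_succ, Nat.succ_mul] using ih.mul hx

theorem mul_sub_mul {x' y' : K} (hx : PowDvd P r (x - x')) (hy : PowDvd P r (y - y'))
    (hx' : PowDvd P 0 x') (hy0 : PowDvd P 0 y) : PowDvd P r (x * y - x' * y') := by
  rw [show x * y - x' * y' = (x - x') * y + x' * (y - y') by ring]
  exact (hx.mul_right hy0).add (hx'.mul_left hy)

variable {ι : Type*} {t : Finset ι} {f g : ι → K}

theorem sum (hf : ∀ i ∈ t, PowDvd P r (f i)) : PowDvd P r (∑ i ∈ t, f i) := by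
  induction t using Finset.cons_induction with
  | empty => simpa using zero
  | cons a t ha ih =>
    rw [sum_cons]
    exact (hf a (mem_cons_self a t)).add (ih fun i hi => hf i (mem_cons_of_mem hi))

theorem prod (hf : ∀ i ∈ t, PowDvd P 0 (f i)) : PowDvd P 0 (∏ i ∈ t, f i) := by
  induction t using Finset.cons_induction with
  | empty => simpa using one
  | cons a t ha ih =>
    rw [prod_cons]
    exact (hf a (mem_cons_self a t)).mul (ih fun i hi => hf i (mem_cons_of_mem hi))

theorem prod_sub_prod (hf : ∀ i ∈ t, PowDvd P 0 (f i)) (hg : ∀ i ∈ t, PowDvd P 0 (g i))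
    (hfg : ∀ i ∈ t, PowDvd P r (f i - g i)) :
    PowDvd P r (∏ i ∈ t, f i - ∏ i ∈ t, g i) := by
  induction t using Finset.cons_induction with
  | empty => simpa using zero
  | cons a t ha ih =>
    have ih' := ih (fun i hi => hf i (mem_cons_of_mem hi)) (fun i hi => hg i (mem_cons_of_mem hi))
      (fun i hi => hfg i (mem_cons_of_mem hi))
    rw [prod_cons, prod_cons,
      show f a * ∏ i ∈ t, f i - g a * ∏ i ∈ t, g i
        = (f a - g a) * ∏ i ∈ t, f i + g a * (∏ i ∈ t, f i - ∏ i ∈ t, g i) by ring]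
    exact ((hfg a (mem_cons_self a t)).mul_right (prod fun i hi => hf i (mem_cons_of_mem hi))).add
      ((hg a (mem_cons_self a t)).mul_left ih')

theorem prod_one_add_sub (hf : ∀ i ∈ t, PowDvd P 1 (f i)) :
    PowDvd P 2 (∏ i ∈ t, (1 + f i) - (1 + ∑ i ∈ t, f i)) := by
  induction t using Finset.cons_induction with
  | empty => simpa using zero
  | cons a t ha ih =>
    have hft : ∀ i ∈ t, PowDvd P 1 (f i) := fun i hi => hf i (mem_cons_of_mem hi)
    have hfa := hf a (mem_cons_self a t)
    rw [prod_cons, sum_cons,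
      show (1 + f a) * ∏ i ∈ t, (1 + f i) - (1 + (f a + ∑ i ∈ t, f i)) =
        (1 + f a) * (∏ i ∈ t, (1 + f i) - (1 + ∑ i ∈ t, f i)) + f a * ∑ i ∈ t, f i by ring]
    exact ((one.add (hfa.mono (Nat.zero_le 1))).mul_left (ih hft)).add (hfa.mul (sum hft))

theorem prod_add_sub {a b : ι → K} (ha0 : ∀ i ∈ t, a i ≠ 0)
    (ha : ∀ i ∈ t, PowDvd P 0 (a i)) (hb : ∀ i ∈ t, PowDvd P 1 (b i / a i)) :
    PowDvd P 2 (∏ i ∈ t, (a i + b i) - (∏ i ∈ t, a i) * (1 + ∑ i ∈ t, b i / a i)) := by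
  have hfactor : ∏ i ∈ t, (a i + b i) = (∏ i ∈ t, a i) * ∏ i ∈ t, (1 + b i / a i) := by
    rw [← prod_mul_distrib]
    exact prod_congr rfl fun i hi => by field_simp [ha0 i hi]
  rw [hfactor, ← mul_sub]
  exact (prod ha).mul_left (prod_one_add_sub hb)

end PowDvd

end PowDvd

theorem qIntP_add (m n : ℕ) : qIntP (m + n) = qIntP m + X ^ m * qIntP n := by
  simp only [qIntP, sum_range_add, mul_sum, pow_add]

theorem qIntP_ne_zero {n : ℕ} (hn : n ≠ 0) : qIntP n ≠ 0 := by
  intro h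
  have h1 := congrArg (eval 1) h
  simp [qIntP, eval_finsetSum, hn] at h1

theorem isCoprime_qIntP {p j : ℕ} (hp : p.Prime) (hj : j ≠ 0) (hjp : j < p) :
    IsCoprime (qIntP j) (qIntP p) := by
  have hΦ : qIntP p = cyclotomic p ℚ := by
    have := Fact.mk hp
    rw [cyclotomic_prime]; rfl
  rw [hΦ]
  refine ((cyclotomic.irreducible_rat hp.pos).coprime_iff_not_dvd.2 fun hdvd => ?_).symm
  have hdeg : (qIntP j).natDegree ≤ j - 1 :=
    natDegree_sum_le_of_forall_le _ _ fun i hi => by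
      rw [natDegree_X_pow]; have := mem_range.1 hi; omega
  have := natDegree_le_of_dvd hdvd (qIntP_ne_zero hj)
  rw [natDegree_cyclotomic, Nat.totient_prime hp] at this
  omega

theorem qN_add (m n : ℕ) : qN (m + n) = qN m + RatFunc.X ^ m * qN n := by
  simp only [qN, qIntP_add, map_add, map_mul, map_pow, RatFunc.algebraMap_X]

theorem prod_qN_add (p m : ℕ) :
    ∏ i ∈ range (m + 1), qN (p + i) =
      qN p * ∏ i ∈ range m, (qN (i + 1) + qN p * RatFunc.X ^ (i + 1)) := by
  rw [prod_range_succ', add_zero, mul_comm]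
  exact congrArg (qN p * ·) (prod_congr rfl fun i _ => by rw [add_comm p, qN_add, mul_comm])

theorem qN_ne_zero {n : ℕ} (hn : n ≠ 0) : qN n ≠ 0 :=
  RatFunc.algebraMap_ne_zero (qIntP_ne_zero hn)

theorem qqPoch_eq_prod_qN (n : ℕ) :
    qqPoch n = ∏ j ∈ range n, (1 - RatFunc.X) * qN (j + 1) := by
  rw [qqPoch, map_prod]
  refine prod_congr rfl fun j _ => ?_
  rw [qN, qIntP, ← RatFunc.algebraMap_X, ← map_one (algebraMap ℚ[X] (RatFunc ℚ)),
    ← map_sub, ← map_mul, mul_neg_geom_sum]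

theorem one_sub_X_ne_zero : (1 - RatFunc.X : RatFunc ℚ) ≠ 0 := by
  rw [← RatFunc.algebraMap_X, ← map_one (algebraMap ℚ[X] (RatFunc ℚ)), ← map_sub]
  exact RatFunc.algebraMap_ne_zero (by rw [← neg_sub]; exact neg_ne_zero.2 (X_sub_C_ne_zero 1))

theorem qqPoch_ne_zero (n : ℕ) : qqPoch n ≠ 0 := by
  rw [qqPoch_eq_prod_qN]
  exact prod_ne_zero_iff.2 fun j _ => mul_ne_zero one_sub_X_ne_zero (qN_ne_zero j.succ_ne_zero)

theorem qbin_add_mul_inv_qbin {n k : ℕ} (hk : k ≤ n) :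
    qbin (n + k) k * (qbin n k)⁻¹ =
      (∏ i ∈ range k, qN (n + 1 + i)) / ∏ i ∈ range k, qN (n - i) := by
  have hhigh :
      qqPoch (n + k) = qqPoch n * ∏ i ∈ range k, (1 - RatFunc.X) * qN (n + 1 + i) := by
    simp only [qqPoch_eq_prod_qN, prod_range_add, add_right_comm n]
  have hlow : qqPoch n = qqPoch (n - k) * ∏ i ∈ range k, (1 - RatFunc.X) * qN (n - i) := by
    conv_lhs => rw [qqPoch_eq_prod_qN, ← Nat.sub_add_cancel hk, prod_range_add]
    rw [qqPoch_eq_prod_qN, ← prod_range_reflect _ k]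
    refine congrArg _ (prod_congr rfl fun i hi => ?_)
    rw [show n - k + (k - 1 - i) + 1 = n - i by have := mem_range.1 hi; omega]
  have hden : ∏ i ∈ range k, qN (n - i) ≠ 0 :=
    prod_ne_zero_iff.2 fun i hi => qN_ne_zero (by have := mem_range.1 hi; omega)
  rw [qbin, if_pos (Nat.le_add_left k n), Nat.add_sub_cancel, qbin, if_pos hk, hhigh, hlow,
    prod_mul_distrib, prod_mul_distrib]
  have := qqPoch_ne_zero k
  have := qqPoch_ne_zero (n - k)
  have := one_sub_X_ne_zero
  field_simp

theorem inv_add_eq_of_eq_add_mul {K : Type*} [Field K] {a u c P : K} (ha : a ≠ 0) (hu : u ≠ 0)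
    (h : P = u + c * a) : a⁻¹ + c * u⁻¹ * (1 + P * u⁻¹) = (P * u⁻¹) ^ 2 * a⁻¹ := by
  subst h; field_simp; ring

theorem expansion_error_eq {K : Type*} [Field K] {P U u A B ε : K} (hU : U ≠ 0) (hu : u ≠ 0) :
    P * (U * (1 + P * A) * (ε * (U⁻¹ * u⁻¹) * (1 + P * (B + u⁻¹)))) -
      ε * P / u * (1 + P / u + P * (B + A)) = P ^ 3 * (ε * u⁻¹ * (A * (B + u⁻¹))) := by
  field_simp
  ring

theorem sum_range_add_one_eq_choose (k : ℕ) : ∑ i ∈ range k, (i + 1) = (k + 1).choose 2 := by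
  rw [Nat.choose_two_right, ← sum_range_id, sum_range_succ', add_zero]

section Congruences

variable {p : ℕ}

theorem powDvd_qN_self : PowDvd (qIntP p) 1 (qN p) := PowDvd.algebraMap_self

theorem powDvd_qN (n : ℕ) : PowDvd (qIntP p) 0 (qN n) := PowDvd.algebraMap_mem _

theorem powDvd_inv_qN (hp : p.Prime) {j : ℕ} (hj : j ≠ 0) (hjp : j < p) :
    PowDvd (qIntP p) 0 (qN j)⁻¹ :=
  PowDvd.inv_algebraMap (isCoprime_qIntP hp hj hjp)

theorem powDvd_X_pow (n : ℕ) : PowDvd (qIntP p) 0 ((RatFunc.X : RatFunc ℚ) ^ n) := by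
  simpa using (PowDvd.algebraMap_mem (K := RatFunc ℚ) (P := qIntP p) (X : ℚ[X])).pow n

theorem powDvd_prod_qN_add_sub (hp : p.Prime) {m : ℕ} (hm : m < p) :
    PowDvd (qIntP p) 2 (∏ i ∈ range m, (qN (i + 1) + qN p * RatFunc.X ^ (i + 1)) -
      (∏ i ∈ range m, qN (i + 1)) *
        (1 + qN p * ∑ i ∈ range m, RatFunc.X ^ (i + 1) / qN (i + 1))) := by
  simp only [mul_sum, ← mul_div_assoc]
  refine PowDvd.prod_add_sub (fun i _ => qN_ne_zero i.succ_ne_zero) (fun i _ => powDvd_qN _)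
    fun i hi => ?_
  rw [div_eq_mul_inv]
  exact (powDvd_qN_self.mul_right (powDvd_X_pow _)).mul_right
    (powDvd_inv_qN hp i.succ_ne_zero (by have := mem_range.1 hi; omega))

theorem powDvd_inv_qN_sub (hp : p.Prime) {i : ℕ} (hi : i + 1 < p) :
    PowDvd (qIntP p) 2 ((qN (p - 1 - i))⁻¹ -
      -(RatFunc.X ^ (i + 1) * (qN (i + 1))⁻¹ * (1 + qN p * (qN (i + 1))⁻¹))) := by
  have hsplit : qN p = qN (i + 1) + RatFunc.X ^ (i + 1) * qN (p - 1 - i) := by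
    rw [← qN_add]; congr 1; omega
  rw [sub_neg_eq_add, inv_add_eq_of_eq_add_mul (qN_ne_zero (by omega)) (qN_ne_zero (by omega))
    hsplit]
  have hu := powDvd_inv_qN hp (j := i + 1) (by omega) hi
  exact (powDvd_qN_self.mul_right hu).pow 2 |>.mul_right (powDvd_inv_qN hp (by omega) (by omega))

theorem powDvd_prod_inv_qN_sub (hp : p.Prime) {k : ℕ} (hk : k < p) :
    PowDvd (qIntP p) 2 (∏ i ∈ range k, (qN (p - 1 - i))⁻¹ -
      (-1) ^ k * RatFunc.X ^ ((k + 1).choose 2) * (∏ i ∈ range k, qN (i + 1))⁻¹ *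
        (1 + qN p * ∑ i ∈ range k, (qN (i + 1))⁻¹)) := by
  have hinv : ∀ i ∈ range k, PowDvd (qIntP p) 0 (qN (i + 1))⁻¹ := fun i hi =>
    powDvd_inv_qN hp i.succ_ne_zero (by have := mem_range.1 hi; omega)
  have hfactors := PowDvd.prod_sub_prod (f := fun i => (qN (p - 1 - i))⁻¹)
    (g := fun i => -(RatFunc.X ^ (i + 1) * (qN (i + 1))⁻¹ * (1 + qN p * (qN (i + 1))⁻¹)))
    (fun i hi => powDvd_inv_qN hp (j := p - 1 - i) (by have := mem_range.1 hi; omega) (by omega))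
    (fun i hi => (((powDvd_X_pow _).mul_left (hinv i hi)).mul_left
      (PowDvd.one.add (powDvd_qN _ |>.mul_left (hinv i hi)))).neg)
    (fun i hi => powDvd_inv_qN_sub hp (by have := mem_range.1 hi; omega))
  have hexpand := PowDvd.prod_one_add_sub (f := fun i => qN p * (qN (i + 1))⁻¹)
    fun i hi => powDvd_qN_self.mul_right (hinv i hi)
  have hprod : ∏ i ∈ range k,
      -(RatFunc.X ^ (i + 1) * (qN (i + 1))⁻¹ * (1 + qN p * (qN (i + 1))⁻¹)) =
      (-1) ^ k * RatFunc.X ^ ((k + 1).choose 2) * (∏ i ∈ range k, qN (i + 1))⁻¹ *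
        ∏ i ∈ range k, (1 + qN p * (qN (i + 1))⁻¹) := by
    rw [prod_neg, card_range, prod_mul_distrib, prod_mul_distrib, prod_pow_eq_pow_sum,
      sum_range_add_one_eq_choose, prod_inv_distrib]
    ring
  rw [hprod] at hfactors
  rw [← mul_sum] at hexpand
  have hY : PowDvd (qIntP p) 0
      ((-1) ^ k * RatFunc.X ^ ((k + 1).choose 2) * (∏ i ∈ range k, qN (i + 1))⁻¹) := by
    rw [← prod_inv_distrib]
    exact (PowDvd.one.neg.pow k |>.mul_left (powDvd_X_pow _)).mul_left (PowDvd.prod hinv)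
  rw [← sub_add_sub_cancel _ (_ * ∏ i ∈ range k, (1 + qN p * (qN (i + 1))⁻¹)), ← mul_sub]
  exact hfactors.add (hY.mul_left hexpand)

theorem powDvd_qN_mul_prod_sub (hp : p.Prime) {m : ℕ} (hm : m + 1 < p) :
    PowDvd (qIntP p) 3
      (qN p * (∏ i ∈ range m, (qN (i + 1) + qN p * RatFunc.X ^ (i + 1))) *
          ∏ i ∈ range (m + 1), (qN (p - 1 - i))⁻¹ -
        (-1) ^ (m + 1) * RatFunc.X ^ ((m + 1 + 1).choose 2) * qN p / qN (m + 1) *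
          (1 + qN p / qN (m + 1) +
            qN p * ∑ i ∈ range m, (1 + RatFunc.X ^ (i + 1)) / qN (i + 1))) := by
  have hinv : ∀ i ∈ range (m + 1), PowDvd (qIntP p) 0 (qN (i + 1))⁻¹ := fun i hi =>
    powDvd_inv_qN hp i.succ_ne_zero (by have := mem_range.1 hi; omega)
  have hsum : ∑ i ∈ range m, (1 + RatFunc.X ^ (i + 1)) / qN (i + 1) =
      ∑ i ∈ range m, (qN (i + 1))⁻¹ +
        ∑ i ∈ range m, RatFunc.X ^ (i + 1) / qN (i + 1) := by
    rw [← sum_add_distrib]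
    exact sum_congr rfl fun i _ => by rw [add_div, one_div]
  have hnum := powDvd_prod_qN_add_sub hp (m := m) (by omega)
  have hden := powDvd_prod_inv_qN_sub hp hm
  have hB : PowDvd (qIntP p) 0 (∑ i ∈ range (m + 1), (qN (i + 1))⁻¹) := PowDvd.sum hinv
  rw [prod_range_succ (fun i => qN (i + 1)), sum_range_succ, mul_inv] at hden
  rw [sum_range_succ] at hB
  rw [hsum]
  set u := qN (m + 1)
  set U := ∏ i ∈ range m, qN (i + 1)
  set A := ∑ i ∈ range m, RatFunc.X ^ (i + 1) / qN (i + 1)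
  set B := ∑ i ∈ range m, (qN (i + 1))⁻¹
  set ε : RatFunc ℚ := (-1) ^ (m + 1) * RatFunc.X ^ ((m + 1 + 1).choose 2)
  have hA : PowDvd (qIntP p) 0 A := PowDvd.sum fun i hi => by
    rw [div_eq_mul_inv]
    exact (powDvd_X_pow _).mul_left (hinv i (mem_range.2 (by have := mem_range.1 hi; omega)))
  have hnum0 : PowDvd (qIntP p) 0 (U * (1 + qN p * A)) :=
    (PowDvd.prod fun i _ => powDvd_qN _).mul_left (PowDvd.one.add (powDvd_qN _ |>.mul_left hA))
  have hden0 : PowDvd (qIntP p) 0 (∏ i ∈ range (m + 1), (qN (p - 1 - i))⁻¹) :=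
    PowDvd.prod fun i hi => powDvd_inv_qN hp (by have := mem_range.1 hi; omega) (by omega)
  have hε : PowDvd (qIntP p) 0 ε := (PowDvd.one.neg.pow (m + 1)).mul_left (powDvd_X_pow _)
  have happrox := powDvd_qN_self.mul (hnum.mul_sub_mul hden hnum0 hden0)
  have herror : PowDvd (qIntP p) 3 (qN p ^ 3 * (ε * u⁻¹ * (A * (B + u⁻¹)))) :=
    (powDvd_qN_self.pow 3).mul_right
      ((hε.mul_left (hinv m (self_mem_range_succ m))).mul_left (hA.mul_left hB))
  have hU : U ≠ 0 := prod_ne_zero_iff.2 fun i _ => qN_ne_zero i.succ_ne_zero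
  convert happrox.add herror using 1
  rw [← expansion_error_eq hU (qN_ne_zero m.succ_ne_zero)]
  ring

end Congruences

/-- For a prime `p` and `1 ≤ k ≤ p-1`:
`binom_q(p−1+k, k) · binom_q(p−1, k)⁻¹ ≡
  ((-1)^k q^{C(k+1,2)} [p]_q/[k]_q)(1 + [p]_q/[k]_q + [p]_q ∑_{j=1}^{k-1} (1+q^j)/[j]_q)
(mod [p]_q³)`. -/
theorem qbin_ratio (p : ℕ) (hp : p.Prime)
    (k : ℕ) (hk1 : 1 ≤ k) (hk : k ≤ p - 1) :
    qCong p 3 (qbin (p - 1 + k) k * (qbin (p - 1) k)⁻¹)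
      ((-1 : RatFunc ℚ) ^ k * (RatFunc.X : RatFunc ℚ) ^ ((k + 1).choose 2) * qN p / qN k *
        (1 + qN p / qN k +
          qN p * ∑ j ∈ Finset.Icc 1 (k - 1), (1 + (RatFunc.X : RatFunc ℚ) ^ j) / qN j)) := by
  obtain ⟨m, rfl⟩ : ∃ m, k = m + 1 := ⟨k - 1, by omega⟩
  have hsum : ∑ j ∈ Icc 1 (m + 1 - 1), (1 + RatFunc.X ^ j) / qN j =
      ∑ i ∈ range m, (1 + RatFunc.X ^ (i + 1)) / qN (i + 1) := by
    rw [Nat.add_sub_cancel, ← Ico_add_one_right_eq_Icc, sum_Ico_eq_sum_range, Nat.add_sub_cancel]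
    exact sum_congr rfl fun i _ => by rw [add_comm 1 i]
  rw [qbin_add_mul_inv_qbin hk, Nat.sub_add_cancel hp.one_le, prod_qN_add, div_eq_mul_inv,
    ← prod_inv_distrib, hsum]
  exact powDvd_qN_mul_prod_sub hp (by omega)
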